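/- arXiv:2001.09790 — 2 statements merged into one kernel-verified Lean document; each statement's English description precedes it below -/
import Mathlib

section
/- Fix p > 0, k ∈ (0,1), and v ∈ ℝ. Then at every u ∈ ℝ with u ≠ v, the function u ↦ T₀(p,k,u,v) is differentiable, and its derivative D at u satisfies (π/2)·w_k(u)·(u−v)²·D = −(u−v)²·E(k) + p·K(k)·w_k(u)·w_k(v) + K(k)·(1 + u² − u·v + k²·u·v + v² + k²·u²·v²). -/
open Real

/-- Complete elliptic integral of the first kind. -/
noncomputable def ellK (k : ℝ) : ℝ :=
  ∫ θ in (0:ℝ)..(π/2), 1 / Real.sqrt (1 - k^2 * Real.sin θ ^ 2)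

/-- Complete elliptic integral of the second kind. -/
noncomputable def ellE (k : ℝ) : ℝ :=
  ∫ θ in (0:ℝ)..(π/2), Real.sqrt (1 - k^2 * Real.sin θ ^ 2)

/-- The function w_k(x) = √((1+x²)(1+k²x²)). -/
noncomputable def wk (k x : ℝ) : ℝ := Real.sqrt ((1 + x^2) * (1 + k^2 * x^2))

/-- Incomplete integral 𝔉_k. -/
noncomputable def incF (k x : ℝ) : ℝ :=
  ∫ t in (0:ℝ)..x, 1 / Real.sqrt ((1 + t^2) * (1 + k^2 * t^2))

/-- Incomplete integral 𝔈_k. -/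
noncomputable def incE (k x : ℝ) : ℝ :=
  ∫ t in (0:ℝ)..x,
    (1 - k^2) / (Real.sqrt (1 + t^2) * (Real.sqrt (1 + k^2 * t^2) + k * Real.sqrt (1 + t^2)))

/-- The function T₀. -/
noncomputable def T₀ (p k u v : ℝ) : ℝ :=
  (2/π) * ( p * (ellE k * incF k v - ellK k * incE k v)
    - (ellE k * incF k u - ellK k * incE k u)
    - ellK k * ( p * (wk k v / (u - v) + k * v) + (wk k u / (u - v) - k * u) ) )

/-! Differentiate `T₀` term by term. Since `(√(1+k²t²) + k√(1+t²))(√(1+k²t²) - k√(1+t²)) = 1 - k²`,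
the integrand of `𝔈_k` is `√(1+k²t²)/√(1+t²) - k = (1+k²t²)/w_k(t) - k`, so both `𝔉_k'` and `𝔈_k'`
are rational in `x` and `w_k(x)`, as is `w_k' = x(1+k²+2k²x²)/w_k`. Multiplying the derivative by
`(π/2)·w_k(u)·(u-v)²` and using `w_k(u)² = (1+u²)(1+k²u²)` leaves a polynomial identity. -/

section

variable (k : ℝ)

theorem sqrt_mul_sqrt_eq_wk (x : ℝ) : √(1 + x^2) * √(1 + k^2 * x^2) = wk k x :=
  (Real.sqrt_mul (by positivity) _).symm

theorem wk_pos (x : ℝ) : 0 < wk k x :=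
  Real.sqrt_pos.mpr (by positivity)

theorem sq_wk (x : ℝ) : wk k x ^ 2 = (1 + x^2) * (1 + k^2 * x^2) :=
  Real.sq_sqrt (by positivity)

theorem continuous_wk : Continuous (wk k) := by
  unfold wk
  fun_prop

theorem hasDerivAt_wk (x : ℝ) :
    HasDerivAt (wk k) (x * (1 + k^2 + 2 * k^2 * x^2) / wk k x) x := by
  have hpoly : HasDerivAt (fun x : ℝ => (1 + x^2) * (1 + k^2 * x^2))
      (2 * x * (1 + k^2 * x^2) + (1 + x^2) * (k^2 * (2 * x))) x := by
    have h1 : HasDerivAt (fun x : ℝ => 1 + x^2) (2 * x) x := by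
      simpa using (hasDerivAt_pow 2 x).const_add 1
    have h2 : HasDerivAt (fun x : ℝ => 1 + k^2 * x^2) (k^2 * (2 * x)) x := by
      simpa using ((hasDerivAt_pow 2 x).const_mul (k^2)).const_add 1
    exact h1.mul h2
  refine (hpoly.sqrt (by positivity)).congr_deriv ?_
  rw [← wk]
  field_simp [(wk_pos k x).ne']
  ring

theorem hasDerivAt_incF (x : ℝ) : HasDerivAt (incF k) (1 / wk k x) x :=
  ((continuous_const.div (continuous_wk k) fun t => (wk_pos k t).ne').integral_hasStrictDerivAt
    0 x).hasDerivAt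

variable {k}

theorem incE_integrand_eq (hk : 0 ≤ k) (t : ℝ) :
    (1 - k^2) / (√(1 + t^2) * (√(1 + k^2 * t^2) + k * √(1 + t^2)))
      = (1 + k^2 * t^2) / wk k t - k := by
  have hA2 : √(1 + t^2) ^ 2 = 1 + t^2 := Real.sq_sqrt (by positivity)
  have hB2 : √(1 + k^2 * t^2) ^ 2 = 1 + k^2 * t^2 := Real.sq_sqrt (by positivity)
  rw [← sqrt_mul_sqrt_eq_wk, div_sub' (by positivity), div_eq_div_iff (by positivity) (by positivity)]
  linear_combination (k^2 * √(1 + t^2) * √(1 + k^2 * t^2)) * hA2 + (k * √(1 + t^2) ^ 2) * hB2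

theorem hasDerivAt_incE (hk : 0 ≤ k) (x : ℝ) :
    HasDerivAt (incE k) ((1 + k^2 * x^2) / wk k x - k) x := by
  have hcont : Continuous fun t : ℝ => (1 + k^2 * t^2) / wk k t - k :=
    ((by fun_prop : Continuous fun t : ℝ => 1 + k^2 * t^2).div (continuous_wk k)
      fun t => (wk_pos k t).ne').sub continuous_const
  have hincE : incE k = fun x => ∫ t in (0:ℝ)..x, ((1 + k^2 * t^2) / wk k t - k) := by
    funext x
    simp only [incE, incE_integrand_eq hk]
  rw [hincE]
  exact (hcont.integral_hasStrictDerivAt 0 x).hasDerivAt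

end

theorem hasDerivAt_T₀ {p k u v : ℝ} (hk : 0 ≤ k) (huv : u ≠ v) :
    HasDerivAt (fun u' => T₀ p k u' v)
      ((2/π) * ((ellK k * (1 + k^2 * u^2) - ellE k) / wk k u
        + ellK k * (p * wk k v + wk k u - u * (1 + k^2 + 2 * k^2 * u^2) / wk k u * (u - v))
          / (u - v)^2)) u := by
  have hsub : u - v ≠ 0 := sub_ne_zero.mpr huv
  have hfrac {c : ℝ → ℝ} {c' : ℝ} (hc : HasDerivAt c c' u) :
      HasDerivAt (fun u' => c u' / (u' - v)) ((c' * (u - v) - c u) / (u - v)^2) u :=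
    (hc.div ((hasDerivAt_id' u).sub_const v) hsub).congr_deriv (by ring)
  have hinc := ((hasDerivAt_incF k u).const_mul (ellE k)).sub
    ((hasDerivAt_incE hk u).const_mul (ellK k))
  have hrat := (((hfrac (hasDerivAt_const u (wk k v))).add_const (k * v)).const_mul p).add
    ((hfrac (hasDerivAt_wk k u)).sub ((hasDerivAt_id u).const_mul k))
  refine (((hinc.const_sub (p * (ellE k * incF k v - ellK k * incE k v))).sub
    (hrat.const_mul (ellK k))).const_mul (2/π)).congr_deriv ?_
  field_simp [(wk_pos k u).ne']
  ring

theorem stmt_7_general (p k v u : ℝ) (hk : k ∈ Set.Ioo (0:ℝ) 1) (huv : u ≠ v) :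
    ∃ D : ℝ, HasDerivAt (fun u' => T₀ p k u' v) D u ∧
      (π/2) * wk k u * (u - v)^2 * D =
        -(u - v)^2 * ellE k + p * ellK k * wk k u * wk k v
          + ellK k * (1 + u^2 - u*v + k^2 * u * v + v^2 + k^2 * u^2 * v^2) := by
  refine ⟨_, hasDerivAt_T₀ hk.1.le huv, ?_⟩
  have hsub : u - v ≠ 0 := sub_ne_zero.mpr huv
  field_simp [(wk_pos k u).ne', Real.pi_ne_zero]
  linear_combination ellK k * sq_wk k u

theorem stmt_7 (p k v u : ℝ) (hp : 0 < p) (hk : k ∈ Set.Ioo (0:ℝ) 1) (huv : u ≠ v) :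
    ∃ D : ℝ, HasDerivAt (fun u' => T₀ p k u' v) D u ∧
      (π/2) * wk k u * (u - v)^2 * D =
        -(u - v)^2 * ellE k + p * ellK k * wk k u * wk k v
          + ellK k * (1 + u^2 - u*v + k^2 * u * v + v^2 + k^2 * u^2 * v^2) :=
  stmt_7_general p k v u hk huv
end

section
/- For every p ≥ 1, k ∈ (0,1), and all real numbers u, v, the quantity −(u−v)²·E(k) + p·K(k)·w_k(u)·w_k(v) + K(k)·(1 + u² − u·v + k²·u·v + v² + k²·u²·v²) is strictly positive. -/
open Real

lemma aux_pos (k : ℝ) (hk : k ∈ Set.Ioo (0:ℝ) 1) (θ : ℝ) :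
    0 < 1 - k^2 * Real.sin θ ^ 2 := by
  obtain ⟨h0, h1⟩ := hk
  nlinarith [Real.sin_sq_le_one θ, sq_nonneg (Real.sin θ)]

lemma contE (k : ℝ) : Continuous fun θ : ℝ => Real.sqrt (1 - k^2 * Real.sin θ ^ 2) := by
  apply Real.continuous_sqrt.comp
  continuity

lemma contK (k : ℝ) (hk : k ∈ Set.Ioo (0:ℝ) 1) :
    Continuous fun θ : ℝ => 1 / Real.sqrt (1 - k^2 * Real.sin θ ^ 2) := by
  apply Continuous.div continuous_const (contE k)
  intro θ
  exact (Real.sqrt_pos.2 (aux_pos k hk θ)).ne'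

lemma ellK_pos (k : ℝ) (hk : k ∈ Set.Ioo (0:ℝ) 1) : 0 < ellK k := by
  apply intervalIntegral.intervalIntegral_pos_of_pos_on
    ((contK k hk).intervalIntegrable _ _)
  · intro θ _
    have := aux_pos k hk θ
    positivity
  · positivity

lemma ellE_le_ellK (k : ℝ) (hk : k ∈ Set.Ioo (0:ℝ) 1) : ellE k ≤ ellK k := by
  apply intervalIntegral.integral_mono_on (by positivity)
    ((contE k).intervalIntegrable _ _) ((contK k hk).intervalIntegrable _ _)
  intro θ _
  have hx := aux_pos k hk θ
  have h2 : 0 < Real.sqrt (1 - k^2 * Real.sin θ ^ 2) := Real.sqrt_pos.2 hx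
  have h1 : Real.sqrt (1 - k^2 * Real.sin θ ^ 2) ≤ 1 := by
    have : (1:ℝ) = Real.sqrt 1 := by simp
    nth_rewrite 2 [this]
    apply Real.sqrt_le_sqrt
    nlinarith [sq_nonneg (k * Real.sin θ)]
  rw [le_div_iff₀ h2]
  nlinarith

lemma key (k u v : ℝ) : 0 < wk k u * wk k v + (1 + u*v) * (1 + k^2 * u * v) := by
  have hu : (0:ℝ) < (1 + u^2) * (1 + k^2 * u^2) := by positivity
  have hv : (0:ℝ) < (1 + v^2) * (1 + k^2 * v^2) := by positivity
  have hA : 0 < wk k u * wk k v :=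
    mul_pos (Real.sqrt_pos.2 hu) (Real.sqrt_pos.2 hv)
  rcases le_or_gt 0 ((1 + u*v) * (1 + k^2 * u * v)) with hP | hP
  · linarith
  · have huv : u ≠ v := by
      rintro rfl
      nlinarith [sq_nonneg (u*u), sq_nonneg (k*u*u)]
    have hA2 : (wk k u * wk k v)^2
        = ((1 + u^2) * (1 + k^2 * u^2)) * ((1 + v^2) * (1 + k^2 * v^2)) := by
      rw [mul_pow, wk, wk, Real.sq_sqrt hu.le, Real.sq_sqrt hv.le]
    have h0 : (0:ℝ) < (u - v)^2 := by
      have : u - v ≠ 0 := sub_ne_zero.2 huv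
      positivity
    have hlt : ((1 + u*v) * (1 + k^2 * u * v))^2 < (wk k u * wk k v)^2 := by
      rw [hA2]
      have t1 : 0 < (u - v)^2 * ((1 + k^2*u^2) * (1 + k^2*v^2)) := by positivity
      have t2 : 0 ≤ (u - v)^2 * (k^2 * (1 + u*v)^2) := by positivity
      nlinarith [t1, t2]
    nlinarith [hlt, hA, hP]

theorem stmt_8 (p k u v : ℝ) (hp : 1 ≤ p) (hk : k ∈ Set.Ioo (0:ℝ) 1) :
    0 < -(u - v)^2 * ellE k + p * ellK k * wk k u * wk k v
      + ellK k * (1 + u^2 - u*v + k^2 * u * v + v^2 + k^2 * u^2 * v^2) := by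
  have hK := ellK_pos k hk
  have hEK := ellE_le_ellK k hk
  have hkey := key k u v
  have hA : 0 ≤ wk k u * wk k v := by
    unfold wk; positivity
  nlinarith [mul_nonneg (sq_nonneg (u - v)) (sub_nonneg.2 hEK),
    mul_nonneg (mul_nonneg (sub_nonneg.2 hp) hK.le) hA,
    mul_pos hK hkey]
end
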